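/- arXiv:0707.0226 — 2 statements merged into one kernel-verified Lean document; each statement's English description precedes it below -/
import Mathlib

section
/- Let G be a connected bipartite graph with bipartition X ∪ Y such that |X| ≤ |Y|. If γ(G) = |X|, then G contains a matching of size |X| (i.e., a matching saturating X). -/
open SimpleGraph

/-- The domination number of a graph: the least size of a dominating set. -/
noncomputable def SimpleGraph.dominationNumber {V : Type*} (G : SimpleGraph V) : ℕ :=
  sInf {n | ∃ s : Set V, s.ncard = n ∧ ∀ v, v ∈ s ∨ ∃ u ∈ s, G.Adj u v}

/-!
If `S ⊆ X` violated Hall's condition, then `(X \ S) ∪ N(S)` would dominate `G` (every vertex has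
a neighbour, and every vertex outside `X` has all its neighbours in `X`) while having fewer than
`|X| = γ(G)` vertices. So Hall's theorem gives a matching saturating `X`.
-/

namespace SimpleGraph

variable {V : Type*} {G : SimpleGraph V}

def IsDominatingSet (G : SimpleGraph V) (s : Set V) : Prop :=
  ∀ v, v ∈ s ∨ ∃ u ∈ s, G.Adj u v

lemma IsDominatingSet.dominationNumber_le_ncard {s : Set V} (hs : G.IsDominatingSet s) :
    G.dominationNumber ≤ s.ncard :=
  Nat.sInf_le ⟨s, rfl, hs⟩

lemma isDominatingSet_sdiff_union_iUnion_neighborSet {X : Set V}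
    (hX : ∀ v w, G.Adj v w → v ∈ X ∨ w ∈ X) (hadj : ∀ v, ∃ w, G.Adj v w) (S : Set V) :
    G.IsDominatingSet ((X \ S) ∪ ⋃ x ∈ S, G.neighborSet x) := by
  intro v
  obtain ⟨w, hvw⟩ := hadj v
  by_cases hvS : v ∈ S
  · exact .inr ⟨w, .inr (Set.mem_biUnion hvS hvw), hvw.symm⟩
  by_cases hvX : v ∈ X
  · exact .inl (.inl ⟨hvX, hvS⟩)
  have hwX : w ∈ X := (hX v w hvw).resolve_left hvX
  by_cases hwS : w ∈ S
  · exact .inl (.inr (Set.mem_biUnion hwS hvw.symm))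
  · exact .inr ⟨w, .inl ⟨hwX, hwS⟩, hvw.symm⟩

lemma ncard_le_ncard_iUnion_neighborSet [Finite V] {X S : Set V}
    (hX : ∀ v w, G.Adj v w → v ∈ X ∨ w ∈ X) (hadj : ∀ v, ∃ w, G.Adj v w)
    (hγ : X.ncard ≤ G.dominationNumber) (hS : S ⊆ X) :
    S.ncard ≤ (⋃ x ∈ S, G.neighborSet x).ncard := by
  have hdom := (isDominatingSet_sdiff_union_iUnion_neighborSet hX hadj S).dominationNumber_le_ncard
  have hunion := Set.ncard_union_le (X \ S) (⋃ x ∈ S, G.neighborSet x)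
  have hsplit := Set.ncard_sdiff_add_ncard_of_subset hS
  omega

end SimpleGraph

theorem bipartite_domination_eq_side_matching_general {V : Type*} [Fintype V]
    (G : SimpleGraph V) (hconn : G.Connected) (X Y : Set V)
    (hdisj : X ∩ Y = ∅)
    (hbip : ∀ u v, G.Adj u v → (u ∈ X ∧ v ∈ Y) ∨ (u ∈ Y ∧ v ∈ X))
    (hcard : X.ncard ≤ Y.ncard) (hdom : G.dominationNumber = X.ncard) :
    ∃ M : G.Subgraph, M.IsMatching ∧ X ⊆ M.verts := by
  classical
  have hXY : G.IsBipartiteWith X Y := ⟨Set.disjoint_iff_inter_eq_empty.mpr hdisj, hbip⟩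
  rcases X.eq_empty_or_nonempty with rfl | ⟨x, hx⟩
  · exact ⟨⊥, fun _ hv => hv.elim, Set.empty_subset _⟩
  obtain ⟨y, hy⟩ : Y.Nonempty :=
    Set.nonempty_of_ncard_ne_zero (((Set.ncard_pos X.toFinite).mpr ⟨x, hx⟩).trans_le hcard).ne'
  have : Nontrivial V := ⟨⟨x, y, hXY.disjoint.ne_of_mem hx hy⟩⟩
  have hcover (v w : V) (h : G.Adj v w) : v ∈ X ∨ w ∈ X := by
    rcases hbip v w h with h | h
    exacts [.inl h.1, .inr h.2]
  obtain ⟨M, hXM, hM⟩ := exists_isMatching_of_forall_ncard_le hXY fun S hS =>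
    ncard_le_ncard_iUnion_neighborSet hcover hconn.preconnected.exists_adj_of_nontrivial
      hdom.ge hS
  exact ⟨M, hM, hXM⟩

theorem bipartite_domination_eq_side_matching {V : Type*} [Fintype V]
    (G : SimpleGraph V) (hconn : G.Connected) (X Y : Set V)
    (hunion : X ∪ Y = Set.univ) (hdisj : X ∩ Y = ∅)
    (hbip : ∀ u v, G.Adj u v → (u ∈ X ∧ v ∈ Y) ∨ (u ∈ Y ∧ v ∈ X))
    (hcard : X.ncard ≤ Y.ncard) (hdom : G.dominationNumber = X.ncard) :
    ∃ M : G.Subgraph, M.IsMatching ∧ X ⊆ M.verts :=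
  bipartite_domination_eq_side_matching_general G hconn X Y hdisj hbip hcard hdom
end

section
/- A connected graph G with at least one edge is star-uniform if and only if ν(G) = γ(G), where ν(G) is the matching number and γ(G) is the domination number. -/
open SimpleGraph

/-- A subgraph is a star-factor if it is spanning, has no isolated vertices,
and every edge has an endpoint of degree one (equivalently, every component
is a star `K_{1,n}` with `n ≥ 1`). -/
def SimpleGraph.Subgraph.IsStarFactor {V : Type*} {G : SimpleGraph V}
    (H : G.Subgraph) : Prop :=
  H.IsSpanning ∧ (∀ v : V, ∃ w, H.Adj v w) ∧
    ∀ ⦃u v⦄, H.Adj u v → (∀ w, H.Adj u w → w = v) ∨ (∀ w, H.Adj v w → w = u)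

/-- The number of connected components of a subgraph. -/
noncomputable def SimpleGraph.Subgraph.numComponents {V : Type*} {G : SimpleGraph V}
    (H : G.Subgraph) : ℕ :=
  Nat.card H.coe.ConnectedComponent

/-- A graph is star-uniform if all its star-factors have the same number
of components. -/
def SimpleGraph.IsStarUniform {V : Type*} (G : SimpleGraph V) : Prop :=
  ∀ H₁ H₂ : G.Subgraph, H₁.IsStarFactor → H₂.IsStarFactor →
    H₁.numComponents = H₂.numComponents

/-- The matching number of a graph: the size of a maximum matching. -/
noncomputable def SimpleGraph.matchingNumber {V : Type*} (G : SimpleGraph V) : ℕ :=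
  sSup {n | ∃ M : G.Subgraph, M.IsMatching ∧ M.edgeSet.ncard = n}

/-!
A star-factor with a chosen center in each star is the same as a map `f : V → V` retracting `V`
onto the set of centers, and the star-factor then has `|range f|` components. The centers dominate
`G`, and joining each center to one of its leaves gives a matching, so every star-factor has between
`γ(G)` and `ν(G)` components. Both bounds are attained when `G` has no isolated vertex. Hang every
unmatched vertex of a maximum matching on a matched neighbor; since there is no augmenting path
of length three, each matching edge has an endpoint that receives all pendants of that edge, and
taking these endpoints as centers gives `ν(G)` stars. A minimum dominating set in which every vertex
has an external private neighbor (Bollobás–Cockayne) gives `γ(G)` stars.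
-/

namespace SimpleGraph

variable {V : Type*} {G : SimpleGraph V}

lemma numComponents_eq_ncard_range {H : G.Subgraph} (hH : H.IsSpanning) {α : Type*} (f : V → α)
    (hf : ∀ x y, H.spanningCoe.Reachable x y ↔ f x = f y) :
    H.numComponents = (Set.range f).ncard := by
  let e : H.spanningCoe.ConnectedComponent ≃ Set.range f :=
    Equiv.ofBijective (ConnectedComponent.lift (fun v => ⟨f v, v, rfl⟩)
      fun _ _ p _ => Subtype.ext ((hf _ _).1 p.reachable)) <| by
      refine ⟨fun C C' h => ?_, fun ⟨_, v, rfl⟩ => ⟨H.spanningCoe.connectedComponentMk v, rfl⟩⟩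
      induction C using ConnectedComponent.ind
      induction C' using ConnectedComponent.ind
      exact ConnectedComponent.sound ((hf _ _).2 (congrArg Subtype.val h))
  rw [Subgraph.numComponents, ← Nat.card_coe_set_eq,
    ← Nat.card_congr ((H.spanningCoeEquivCoeOfSpanning hH).connectedComponentEquiv),
    Nat.card_congr e]

/-- `f` sends each vertex to the center of its star in a star-factor of `G`. -/
structure IsStarRetraction (G : SimpleGraph V) (f : V → V) : Prop where
  map_map : ∀ v, f (f v) = f v
  adj_of_ne : ∀ v, f v ≠ v → G.Adj (f v) v
  exists_ne : ∀ v, ∃ w ≠ f v, f w = f v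

namespace IsStarRetraction

variable {f : V → V} (hf : IsStarRetraction G f)

def starFactor : G.Subgraph :=
  toSubgraph (fromRel fun x y => f x = y) fun x y hxy => by
    obtain ⟨hne, rfl | rfl⟩ := (fromRel_adj _ x y).1 hxy
    exacts [(hf.adj_of_ne x hne.symm).symm, hf.adj_of_ne y hne]

lemma starFactor_adj {x y : V} : hf.starFactor.Adj x y ↔ x ≠ y ∧ (f x = y ∨ f y = x) :=
  fromRel_adj (fun x y => f x = y) x y

lemma reachable_starFactor_iff (x y : V) :
    hf.starFactor.spanningCoe.Reachable x y ↔ f x = f y := by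
  constructor
  · rintro ⟨p⟩
    induction p with
    | nil => rfl
    | cons h _ ih =>
      obtain ⟨-, rfl | rfl⟩ := hf.starFactor_adj.1 h
      exacts [(hf.map_map _).symm.trans ih, (hf.map_map _).trans ih]
  · have toCenter : ∀ v, hf.starFactor.spanningCoe.Reachable v (f v) := fun v => by
      by_cases hv : f v = v
      · rw [hv]
      · exact Adj.reachable (hf.starFactor_adj.2 ⟨Ne.symm hv, Or.inl rfl⟩)
    intro hxy
    exact (toCenter x).trans (hxy ▸ (toCenter y).symm)

lemma isStarFactor : hf.starFactor.IsStarFactor := by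
  refine ⟨toSubgraph.isSpanning _ _, fun v => ?_, fun u v huv => ?_⟩
  · by_cases hv : f v = v
    · obtain ⟨w, hw, hwv⟩ := hf.exists_ne v
      exact ⟨w, hf.starFactor_adj.2 ⟨(hv ▸ hw).symm, Or.inr (hwv.trans hv)⟩⟩
    · exact ⟨f v, hf.starFactor_adj.2 ⟨Ne.symm hv, Or.inl rfl⟩⟩
  have leaf : ∀ {u v}, u ≠ v → f u = v → ∀ w, hf.starFactor.Adj u w → w = v := by
    rintro u _ huv rfl w huw
    obtain ⟨-, rfl | rfl⟩ := hf.starFactor_adj.1 huw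
    · rfl
    · exact absurd (hf.map_map w) huv.symm
  obtain ⟨hne, h | h⟩ := hf.starFactor_adj.1 huv
  exacts [Or.inl (leaf hne h), Or.inr (leaf hne.symm h)]

lemma numComponents_starFactor : hf.starFactor.numComponents = (Set.range f).ncard :=
  numComponents_eq_ncard_range (toSubgraph.isSpanning _ _) f hf.reachable_starFactor_iff

end IsStarRetraction

namespace Subgraph

variable {H : G.Subgraph}

def IsStarCenter (H : G.Subgraph) (c : V) : Prop :=
  ∀ ⦃u⦄, H.Adj c u → ∀ ⦃w⦄, H.Adj u w → w = c

lemma IsStarFactor.exists_isStarCenter (hH : H.IsStarFactor) (v : V) :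
    ∃ c, H.IsStarCenter c ∧ (c = v ∨ H.Adj c v) := by
  obtain ⟨w, hvw⟩ := hH.2.1 v
  by_cases hleaf : ∀ x, H.Adj v x → x = w
  · refine ⟨w, fun u hwu x hux => ?_, Or.inr hvw.symm⟩
    rcases hH.2.2 hwu with h | h
    · exact (h v hvw.symm ▸ hleaf) x hux
    · exact h x hux
  · refine ⟨v, fun u hvu x hux => ?_, Or.inl rfl⟩
    rcases hH.2.2 hvu with h | h
    · exact absurd (fun x hx => (h x hx).trans (h w hvw).symm) hleaf
    · exact h x hux

lemma IsStarCenter.eq_or_adj_of_reachable {c v : V} (hc : H.IsStarCenter c)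
    (h : H.spanningCoe.Reachable c v) : v = c ∨ H.Adj c v := by
  suffices ∀ {x y}, H.spanningCoe.Walk x y → (x = c ∨ H.Adj c x) → y = c ∨ H.Adj c y from
    this h.some (Or.inl rfl)
  intro x y p
  induction p with
  | nil => exact id
  | cons hxy _ ih =>
    rintro (rfl | hx)
    exacts [ih (Or.inr hxy), ih (Or.inl (hc hx hxy))]

lemma IsStarFactor.exists_isStarRetraction (hH : H.IsStarFactor) :
    ∃ f, G.IsStarRetraction f ∧ H.numComponents = (Set.range f).ncard := by
  have hcenter : ∀ C : H.spanningCoe.ConnectedComponent,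
      ∃ c, H.IsStarCenter c ∧ H.spanningCoe.connectedComponentMk c = C := by
    refine ConnectedComponent.ind fun v => ?_
    obtain ⟨c, hc, rfl | hcv⟩ := hH.exists_isStarCenter v
    exacts [⟨c, hc, rfl⟩, ⟨c, hc, ConnectedComponent.sound (Adj.reachable hcv)⟩]
  choose center hcenter hmk using hcenter
  set f := fun v => center (H.spanningCoe.connectedComponentMk v)
  have hreach : ∀ x y, H.spanningCoe.Reachable x y ↔ f x = f y := fun x y =>
    ConnectedComponent.eq.symm.trans (Function.LeftInverse.injective hmk).eq_iff.symm
  have map_map : ∀ v, f (f v) = f v := fun v => congrArg center (hmk _)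
  refine ⟨f, ⟨map_map, fun v hv => ?_, fun v => ?_⟩, numComponents_eq_ncard_range hH.1 f hreach⟩
  · obtain h | h := (hcenter _).eq_or_adj_of_reachable ((hreach _ _).2 (map_map v))
    exacts [absurd h.symm hv, H.adj_sub h]
  · obtain ⟨w, hw⟩ := hH.2.1 (f v)
    exact ⟨w, hw.ne.symm, ((hreach _ _).1 (Adj.reachable hw)).symm.trans (map_map v)⟩

end Subgraph

def IsDominating (G : SimpleGraph V) (s : Set V) : Prop :=
  ∀ v, v ∈ s ∨ ∃ u ∈ s, G.Adj u v

lemma IsDominating.dominationNumber_le {s : Set V} (hs : G.IsDominating s) :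
    G.dominationNumber ≤ s.ncard :=
  Nat.sInf_le ⟨s, rfl, hs⟩

lemma exists_isDominating_ncard_eq_dominationNumber :
    ∃ s, G.IsDominating s ∧ s.ncard = G.dominationNumber := by
  obtain ⟨s, hcard, hs⟩ := Nat.sInf_mem (s := {n | ∃ s : Set V, s.ncard = n ∧ G.IsDominating s})
    ⟨_, Set.univ, rfl, fun v => Or.inl trivial⟩
  exact ⟨s, hs, hcard⟩

lemma IsStarRetraction.isDominating_range {f : V → V} (hf : G.IsStarRetraction f) :
    G.IsDominating (Set.range f) := fun v => by
  by_cases hv : f v = v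
  exacts [Or.inl ⟨v, hv⟩, Or.inr ⟨f v, ⟨v, rfl⟩, hf.adj_of_ne v hv⟩]

def IsExternalPrivateNeighbor (G : SimpleGraph V) (s : Set V) (d v : V) : Prop :=
  v ∉ s ∧ G.Adj d v ∧ ∀ d' ∈ s, G.Adj d' v → d' = d

lemma IsDominating.exists_retraction {s : Set V} (hs : G.IsDominating s) :
    ∃ p : V → V, (∀ v, p v ∈ s) ∧ (∀ v ∈ s, p v = v) ∧ ∀ v ∉ s, G.Adj (p v) v := by
  have hdom : ∀ v, ∃ d ∈ s, (v ∈ s → d = v) ∧ (v ∉ s → G.Adj d v) := fun v => by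
    by_cases hv : v ∈ s
    · exact ⟨v, hv, fun _ => rfl, absurd hv⟩
    · obtain ⟨d, hd, hdv⟩ := (hs v).resolve_left hv
      exact ⟨d, hd, (absurd · hv), fun _ => hdv⟩
  choose p hps hpfix hpadj using hdom
  exact ⟨p, hps, hpfix, hpadj⟩

lemma exists_isStarRetraction_range_eq {s : Set V} (hs : G.IsDominating s)
    (hpriv : ∀ d ∈ s, ∃ v, G.IsExternalPrivateNeighbor s d v) :
    ∃ f, G.IsStarRetraction f ∧ Set.range f = s := by
  obtain ⟨f, hfs, hfix, hfadj⟩ := hs.exists_retraction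
  refine ⟨f, ⟨fun v => hfix _ (hfs v), fun v hv => hfadj v fun h => hv (hfix v h), fun v => ?_⟩,
    Set.Subset.antisymm (Set.range_subset_iff.2 hfs) fun d hd => ⟨d, hfix d hd⟩⟩
  obtain ⟨w, hws, -, hw⟩ := hpriv (f v) (hfs v)
  exact ⟨w, fun h => hws (h ▸ hfs v), hw _ (hfs w) (hfadj w hws)⟩

lemma IsDominating.exists_adj_of_not_isExternalPrivateNeighbor {s : Set V} {d v : V}
    (hs : G.IsDominating s) (hv : v ∉ s) (hd : ¬G.IsExternalPrivateNeighbor s d v) :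
    ∃ d' ∈ s \ {d}, G.Adj d' v := by
  by_contra! h
  obtain ⟨d', hd', hd'v⟩ := (hs v).resolve_left hv
  have hother : ∀ d'' ∈ s, G.Adj d'' v → d'' = d := fun d'' h₁ h₂ => by
    by_contra hne
    exact h d'' ⟨h₁, hne⟩ h₂
  exact hd ⟨hv, hother d' hd' hd'v ▸ hd'v, hother⟩

lemma IsDominating.insert_diff_singleton {s : Set V} {d u : V} (hs : G.IsDominating s)
    (hd : ∀ v, ¬G.IsExternalPrivateNeighbor s d v) (hdu : G.Adj d u) :
    G.IsDominating (insert u (s \ {d})) := fun v => by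
  by_cases hvd : v = d
  · exact Or.inr ⟨u, Set.mem_insert _ _, hvd ▸ hdu.symm⟩
  by_cases hv : v ∈ s
  · exact Or.inl (Or.inr ⟨hv, hvd⟩)
  obtain ⟨d', hd', hd'v⟩ := hs.exists_adj_of_not_isExternalPrivateNeighbor hv (hd v)
  exact Or.inr ⟨d', Or.inr hd', hd'v⟩

/-- Bollobás–Cockayne: take a minimum dominating set with fewest vertices isolated in the subgraph
it induces. -/
lemma exists_isDominating_forall_exists_isExternalPrivateNeighbor [Finite V]
    (hG : ∀ v, ∃ w, G.Adj v w) : ∃ s, G.IsDominating s ∧ s.ncard = G.dominationNumber ∧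
      ∀ d ∈ s, ∃ v, G.IsExternalPrivateNeighbor s d v := by
  let isolated (s : Set V) : Set V := {x ∈ s | ∀ y ∈ s, ¬G.Adj x y}
  obtain ⟨s, ⟨hs, hcard⟩, hmin⟩ := Set.exists_min_image
    {s | G.IsDominating s ∧ s.ncard = G.dominationNumber} (fun s => (isolated s).ncard)
    (Set.toFinite _) exists_isDominating_ncard_eq_dominationNumber
  refine ⟨s, hs, hcard, fun d hd => ?_⟩
  by_contra! hpriv
  have hpos := (Set.ncard_pos (Set.toFinite s)).2 ⟨d, hd⟩
  have hnbr : ∀ u, G.Adj d u → u ∉ s := fun u hdu hu => by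
    have := (hs.insert_diff_singleton hpriv hdu).dominationNumber_le
    rw [Set.insert_eq_of_mem (show u ∈ s \ {d} from ⟨hu, hdu.ne'⟩),
      Set.ncard_sdiff_singleton_of_mem hd] at this
    omega
  obtain ⟨u, hdu⟩ := hG d
  have hu := hnbr u hdu
  have ht := hs.insert_diff_singleton hpriv hdu
  have htcard : (insert u (s \ {d})).ncard = G.dominationNumber := by
    rw [Set.ncard_insert_of_notMem (fun h => hu h.1), Set.ncard_sdiff_singleton_of_mem hd]
    omega
  have hsub : isolated (insert u (s \ {d})) ⊂ isolated s := by
    refine Set.ssubset_iff_of_subset (fun x (hx : x ∈ isolated _) => ?_) |>.2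
      ⟨d, ⟨hd, fun y hy hdy => hnbr y hdy hy⟩, fun h => ?_⟩
    · obtain ⟨d', hd', hd'u⟩ := hs.exists_adj_of_not_isExternalPrivateNeighbor hu (hpriv u)
      obtain ⟨hxt, hxiso⟩ := hx
      rcases hxt with rfl | ⟨hxs, hxd⟩
      · exact (hxiso d' (Or.inr hd') hd'u.symm).elim
      refine ⟨hxs, fun y hy hxy => ?_⟩
      by_cases hyd : y = d
      · exact hnbr x (hyd ▸ hxy.symm) hxs
      · exact hxiso y (Or.inr ⟨hy, hyd⟩) hxy
    · rcases h.1 with rfl | ⟨-, hdd⟩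
      exacts [hdu.ne rfl, hdd rfl]
  exact (Set.ncard_lt_ncard hsub).not_ge (hmin _ ⟨ht, htcard⟩)

lemma exists_isStarRetraction_ncard_range_eq_dominationNumber [Finite V]
    (hG : ∀ v, ∃ w, G.Adj v w) :
    ∃ f, G.IsStarRetraction f ∧ (Set.range f).ncard = G.dominationNumber := by
  obtain ⟨s, hs, hcard, hpriv⟩ := exists_isDominating_forall_exists_isExternalPrivateNeighbor hG
  obtain ⟨f, hf, hrange⟩ := exists_isStarRetraction_range_eq hs hpriv
  exact ⟨f, hf, hrange ▸ hcard⟩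

namespace Subgraph

variable {M : G.Subgraph}

lemma IsMatching.ncard_verts [Finite V] (hM : M.IsMatching) :
    M.verts.ncard = 2 * M.edgeSet.ncard := by
  have : Fintype M.edgeSet := Fintype.ofFinite _
  have hfiber : ∀ e : M.edgeSet, Nat.card {v // hM.toEdge v = e} = 2 := by
    rintro ⟨e, he⟩
    induction e with | _ u v => ?_
    change Nat.card (hM.toEdge ⁻¹' {_}) = 2
    rw [hM.toEdge_preimage_singleton he, Nat.card_coe_set_eq, Set.ncard_pair]
    exact fun h => (M.adj_sub he).ne (congrArg Subtype.val h)
  rw [← Nat.card_coe_set_eq, ← Nat.card_coe_set_eq,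
    Nat.card_congr (Equiv.sigmaFiberEquiv hM.toEdge).symm, Nat.card_sigma,
    Finset.sum_congr rfl fun e _ => hfiber e, Finset.sum_const, smul_eq_mul, mul_comm,
    Finset.card_univ, Nat.card_eq_fintype_card]

lemma IsMatching.eq_of_mem_edgeSet (hM : M.IsMatching) {e e' : Sym2 V} (he : e ∈ M.edgeSet)
    (he' : e' ∈ M.edgeSet) {v : V} (hv : v ∈ e) (hv' : v ∈ e') : e = e' := by
  obtain ⟨w, rfl⟩ := Sym2.mem_iff_exists.1 hv
  obtain ⟨w', rfl⟩ := Sym2.mem_iff_exists.1 hv'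
  rw [hM.eq_of_adj_left (Subgraph.mem_edgeSet.1 he) (Subgraph.mem_edgeSet.1 he')]

lemma IsMatching.deleteVerts_of_adj (hM : M.IsMatching) {a b : V} (hab : M.Adj a b) :
    (M.deleteVerts {a, b}).IsMatching := by
  rintro v ⟨hv, hvab⟩
  obtain ⟨w, hvw, huniq⟩ := hM hv
  have hwab : w ∉ ({a, b} : Set V) := by
    rintro (rfl | rfl)
    exacts [hvab (Or.inr (hM.eq_of_adj_right hvw hab.symm)),
      hvab (Or.inl (hM.eq_of_adj_right hvw hab))]
  exact ⟨w, deleteVerts_adj.2 ⟨hv, hvab, hvw.snd_mem, hwab, hvw⟩,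
    fun y hy => huniq y (deleteVerts_adj.1 hy).2.2.2.2⟩

end Subgraph

section Matching

variable [Finite V] {M : G.Subgraph}

lemma bddAbove_ncard_edgeSet_isMatching :
    BddAbove {n | ∃ M : G.Subgraph, M.IsMatching ∧ M.edgeSet.ncard = n} := by
  refine ⟨Set.ncard (Set.univ : Set (Sym2 V)), ?_⟩
  rintro _ ⟨M, -, rfl⟩
  exact Set.ncard_le_ncard (Set.subset_univ _)

lemma Subgraph.IsMatching.ncard_edgeSet_le_matchingNumber (hM : M.IsMatching) :
    M.edgeSet.ncard ≤ G.matchingNumber :=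
  le_csSup bddAbove_ncard_edgeSet_isMatching ⟨M, hM, rfl⟩

lemma exists_isMatching_ncard_edgeSet_eq_matchingNumber :
    ∃ M : G.Subgraph, M.IsMatching ∧ M.edgeSet.ncard = G.matchingNumber :=
  Nat.sSup_mem (s := {n | ∃ M : G.Subgraph, M.IsMatching ∧ M.edgeSet.ncard = n})
    ⟨0, ⊥, fun _ h => h.elim, by simp⟩ bddAbove_ncard_edgeSet_isMatching

lemma IsStarRetraction.ncard_range_le_matchingNumber {f : V → V} (hf : G.IsStarRetraction f) :
    (Set.range f).ncard ≤ G.matchingNumber := by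
  choose leaf hleaf_ne hleaf using hf.exists_ne
  have hfib : ∀ c ∈ Set.range f, ∀ x ∈ ({c, leaf c} : Set V), f x = c := by
    rintro _ ⟨v, rfl⟩ x (rfl | rfl)
    exacts [hf.map_map v, (hleaf _).trans (hf.map_map v)]
  have hadj : ∀ c : Set.range f, G.Adj c (leaf c) := fun ⟨c, hc⟩ => by
    have hleaf_c : f (leaf c) = c := hfib c hc (leaf c) (.inr rfl)
    have hne : f (leaf c) ≠ leaf c := fun h =>
      hleaf_ne c (h.symm.trans (hleaf_c.trans (hfib c hc c (.inl rfl)).symm))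
    simpa only [hleaf_c] using hf.adj_of_ne (leaf c) hne
  let M := ⨆ c : Set.range f, G.subgraphOfAdj (hadj c)
  have hM : M.IsMatching := Subgraph.IsMatching.iSup (fun c => .subgraphOfAdj (hadj c))
    fun c c' hcc' => by
      simp only [support_subgraphOfAdj, Set.disjoint_left]
      exact fun x hx hx' => hcc' (Subtype.ext ((hfib c c.2 x hx).symm.trans (hfib c' c'.2 x hx')))
  refine le_trans ?_ hM.ncard_edgeSet_le_matchingNumber
  refine Set.ncard_le_ncard_of_injOn (fun c => s(c, leaf c)) (fun c hc =>
    Subgraph.mem_edgeSet.2 (Subgraph.iSup_adj.2 ⟨⟨c, hc⟩, subgraphOfAdj_adj_self _⟩)) ?_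
  intro c hc c' hc' h
  simpa [hfib c hc, hfib c' hc'] using congrArg (Sym2.map f) h

lemma Subgraph.IsMatching.not_verts_ssubset (hM : M.IsMatching)
    (hmax : M.edgeSet.ncard = G.matchingNumber) {M' : G.Subgraph} (hM' : M'.IsMatching) :
    ¬M.verts ⊂ M'.verts := fun h => by
  have := Set.ncard_lt_ncard h
  rw [hM.ncard_verts, hM'.ncard_verts] at this
  have := hM'.ncard_edgeSet_le_matchingNumber
  omega

lemma Subgraph.IsMatching.mem_verts_of_adj (hM : M.IsMatching)
    (hmax : M.edgeSet.ncard = G.matchingNumber) {u v : V} (hv : v ∉ M.verts) (huv : G.Adj u v) :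
    u ∈ M.verts := by
  by_contra hu
  refine hM.not_verts_ssubset hmax (hM.sup (.subgraphOfAdj huv) ?_)
    (Set.ssubset_iff_of_subset Set.subset_union_left |>.2 ⟨v, Or.inr (Or.inr rfl), hv⟩)
  rw [hM.support_eq_verts, support_subgraphOfAdj, Set.disjoint_right]
  rintro x (rfl | rfl) <;> assumption

/-- An augmenting path `x a b y` would enlarge a maximum matching. -/
lemma Subgraph.IsMatching.eq_of_adj_of_adj (hM : M.IsMatching)
    (hmax : M.edgeSet.ncard = G.matchingNumber) {a b x y : V} (hab : M.Adj a b)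
    (hx : x ∉ M.verts) (hy : y ∉ M.verts) (hax : G.Adj a x) (hby : G.Adj b y) : x = y := by
  by_contra hxy
  have ha := hab.fst_mem
  have hb := hab.snd_mem
  have hne := (M.adj_sub hab).ne
  have hM₁ : (M.deleteVerts {a, b} ⊔ G.subgraphOfAdj hax).IsMatching := by
    refine (hM.deleteVerts_of_adj hab).sup (.subgraphOfAdj hax) ?_
    refine Set.disjoint_of_subset_left (Subgraph.support_subset_verts _) ?_
    rw [support_subgraphOfAdj, Subgraph.deleteVerts_verts]
    simp only [Set.disjoint_left]
    grind
  refine hM.not_verts_ssubset hmax (hM₁.sup (.subgraphOfAdj hby) ?_) ?_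
  · rw [hM₁.support_eq_verts, support_subgraphOfAdj, Subgraph.verts_sup,
      Subgraph.deleteVerts_verts, subgraphOfAdj_verts]
    simp only [Set.disjoint_left]
    grind
  · refine Set.ssubset_iff_of_subset (fun v hv => ?_) |>.2 ⟨x, ?_, hx⟩
    · simp only [Subgraph.verts_sup, Subgraph.deleteVerts_verts, subgraphOfAdj_verts]
      grind
    · simp only [Subgraph.verts_sup, Subgraph.deleteVerts_verts, subgraphOfAdj_verts]
      grind

lemma Subgraph.IsMatching.exists_center (hM : M.IsMatching)
    (hmax : M.edgeSet.ncard = G.matchingNumber) {p : V → V} (hp : ∀ v ∉ M.verts, G.Adj (p v) v)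
    {e : Sym2 V} (he : e ∈ M.edgeSet) : ∃ c ∈ e, ∀ x ∉ M.verts, p x ∈ e → p x = c := by
  induction e with | _ a b => ?_
  by_cases hb : ∃ y ∉ M.verts, p y = b
  · obtain ⟨y, hy, rfl⟩ := hb
    refine ⟨p y, Sym2.mem_mk_right _ _, fun x hx hxe => ?_⟩
    obtain hxa | hxb := Sym2.mem_iff.1 hxe
    · obtain rfl := hM.eq_of_adj_of_adj hmax he hx hy (hxa ▸ hp x hx) (hp y hy)
      exact hxa.symm ▸ hxa
    · exact hxb
  · push Not at hb
    refine ⟨a, Sym2.mem_mk_left _ _, fun x hx hxe => ?_⟩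
    exact (Sym2.mem_iff.1 hxe).resolve_right (hb x hx)

lemma exists_isStarRetraction_matchingNumber_le (hG : ∀ v, ∃ w, G.Adj v w) :
    ∃ f, G.IsStarRetraction f ∧ G.matchingNumber ≤ (Set.range f).ncard := by
  obtain ⟨M, hM, hmax⟩ := exists_isMatching_ncard_edgeSet_eq_matchingNumber (G := G)
  have hdom : G.IsDominating M.verts := fun v => by
    by_cases hv : v ∈ M.verts
    · exact Or.inl hv
    · obtain ⟨w, hvw⟩ := hG v
      exact Or.inr ⟨w, hM.mem_verts_of_adj hmax hv hvw.symm, hvw.symm⟩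
  obtain ⟨p, hpM, hpself, hpadj⟩ := hdom.exists_retraction
  choose center hcenter_mem hcenter using fun e : M.edgeSet => hM.exists_center hmax hpadj e.2
  have hedge : ∀ v, ∃ e : M.edgeSet, p v ∈ (e : Sym2 V) := fun v => by
    obtain ⟨w, hw, -⟩ := hM (hpM v)
    exact ⟨⟨s(p v, w), hw⟩, Sym2.mem_mk_left _ _⟩
  choose E hpE using hedge
  have hE_eq : ∀ (e : M.edgeSet), ∀ u ∈ (e : Sym2 V), E u = e := fun e u hu => by
    have hu' := hpE u
    rw [hpself u (M.mem_verts_of_mem_edge e.2 hu)] at hu'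
    exact Subtype.ext (hM.eq_of_mem_edgeSet (E u).2 e.2 hu' hu)
  have hcenter_fix : ∀ e, center (E (center e)) = center e := fun e => by
    rw [hE_eq e _ (hcenter_mem e)]
  refine ⟨fun v => center (E v), ⟨fun v => hcenter_fix _, fun v hv => ?_, fun v => ?_⟩, ?_⟩
  · by_cases hvM : v ∈ M.verts
    · have hvE := hpE v
      rw [hpself v hvM] at hvE
      obtain ⟨w, hw⟩ := Sym2.mem_iff_exists.1 hvE
      have hvw : M.Adj v w := Subgraph.mem_edgeSet.1 (hw ▸ (E v).2)
      obtain h | h := Sym2.mem_iff.1 (hw ▸ hcenter_mem (E v))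
      exacts [absurd h hv, h ▸ (M.adj_sub hvw).symm]
    · exact hcenter _ v hvM (hpE v) ▸ hpadj v hvM
  · obtain ⟨w, hw⟩ := Sym2.mem_iff_exists.1 (hcenter_mem (E v))
    have hvw : M.Adj (center (E v)) w := Subgraph.mem_edgeSet.1 (hw ▸ (E v).2)
    exact ⟨w, (M.adj_sub hvw).ne.symm, by rw [hE_eq _ w (hw ▸ Sym2.mem_mk_right _ _)]⟩
  · rw [← hmax, ← Nat.card_coe_set_eq, ← Nat.card_coe_set_eq]
    refine Nat.card_le_card_of_injective (fun e => ⟨center e, _, hcenter_fix e⟩) fun e e' h => ?_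
    have h : center e = center e' := congrArg Subtype.val h
    rw [← hE_eq e _ (hcenter_mem e), ← hE_eq e' _ (hcenter_mem e'), h]

end Matching

lemma Subgraph.IsStarFactor.dominationNumber_le_numComponents {H : G.Subgraph}
    (hH : H.IsStarFactor) : G.dominationNumber ≤ H.numComponents := by
  obtain ⟨f, hf, hcard⟩ := hH.exists_isStarRetraction
  exact hcard ▸ hf.isDominating_range.dominationNumber_le

lemma Subgraph.IsStarFactor.numComponents_le_matchingNumber [Finite V] {H : G.Subgraph}
    (hH : H.IsStarFactor) : H.numComponents ≤ G.matchingNumber := by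
  obtain ⟨f, hf, hcard⟩ := hH.exists_isStarRetraction
  exact hcard ▸ hf.ncard_range_le_matchingNumber

end SimpleGraph

theorem starUniform_iff_matching_eq_domination {V : Type*} [Fintype V]
    (G : SimpleGraph V) (hconn : G.Connected) (hedge : ∃ u v, G.Adj u v) :
    G.IsStarUniform ↔ G.matchingNumber = G.dominationNumber := by
  obtain ⟨u, v, huv⟩ := hedge
  have : Nontrivial V := ⟨u, v, huv.ne⟩
  have hG := hconn.preconnected.exists_adj_of_nontrivial
  obtain ⟨fν, hfν, hν⟩ := exists_isStarRetraction_matchingNumber_le hG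
  obtain ⟨fγ, hfγ, hγ⟩ := exists_isStarRetraction_ncard_range_eq_dominationNumber hG
  refine ⟨fun hU => ?_, fun h H₁ H₂ h₁ h₂ => ?_⟩
  · have := hU _ _ hfν.isStarFactor hfγ.isStarFactor
    rw [hfν.numComponents_starFactor, hfγ.numComponents_starFactor] at this
    have := hfν.ncard_range_le_matchingNumber
    omega
  · have := h₁.dominationNumber_le_numComponents
    have := h₁.numComponents_le_matchingNumber
    have := h₂.dominationNumber_le_numComponents
    have := h₂.numComponents_le_matchingNumber
    omega
end
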